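/- arXiv:2512.03646 — 5 statements merged into one kernel-verified Lean document; each statement's English description precedes it below -/
import Mathlib

section
/- Let (I, 𝓘, ι) be a σ-finite measure space with ι ≠ 0, and let η : I → [0,∞), ζ : I → (0,∞) and ξ : I → ℝ be 𝓘-measurable functions such that ∫_I ζ_i ι(di) < ∞ and such that O(y) := ∫_I 1_{{η_i < y}} ζ_i y^{ξ_i} ι(di) < ∞ for every y > 0. Then lim_{y→∞} (ln O(y)) / (ln y) = ι-ess sup ξ, where the limit and the essential supremum are taken in the extended real line. -/
open MeasureTheory Filter Set

/-!
If `ξ > b` on a set of positive measure, then some part of that set lies in `{η < n}`, so for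
`y ≥ max n 1` the integral `O y` is at least `c y ^ b` with `c > 0` the integral of `ζ` over that
part; if `ξ ≤ a` almost everywhere, then `O y ≤ (∫ ζ) y ^ a` for `y ≥ 1`. Taking logarithms and
dividing by `log y`, the constants disappear in the limit, so every `b` below the essential
supremum lies below the liminf, and every `a` above it lies above the limsup.
-/

open Real Topology

lemma tendsto_log_mul_rpow_div_log {c : ℝ} (hc : 0 < c) (b : ℝ) :
    Tendsto (fun y => log (c * y ^ b) / log y) atTop (𝓝 b) := by
  have h : Tendsto (fun y => b + log c / log y) atTop (𝓝 b) := by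
    simpa using tendsto_const_nhds.add (tendsto_const_nhds.div_atTop tendsto_log_atTop)
  refine h.congr' ?_
  filter_upwards [eventually_gt_atTop 1] with y hy
  have hlog : log y ≠ 0 := (log_pos hy).ne'
  rw [log_mul hc.ne' (rpow_pos_of_pos (by linarith) _).ne', log_rpow (by linarith)]
  field_simp
  ring

lemma le_liminf_log_div_log {f : ℝ → ℝ} {c b : ℝ} (hc : 0 < c)
    (h : ∀ᶠ y in atTop, c * y ^ b ≤ f y) :
    (b : EReal) ≤ liminf (fun y => ((log (f y) / log y : ℝ) : EReal)) atTop := by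
  rw [← (EReal.tendsto_coe.2 (tendsto_log_mul_rpow_div_log hc b)).liminf_eq]
  refine liminf_le_liminf ?_
  filter_upwards [h, eventually_gt_atTop 1] with y hy hy1
  have hpos : 0 < c * y ^ b := mul_pos hc (rpow_pos_of_pos (by linarith) _)
  exact EReal.coe_le_coe_iff.2
    (div_le_div_of_nonneg_right (log_le_log hpos hy) (log_pos hy1).le)

lemma limsup_log_div_log_le {f : ℝ → ℝ} {C a : ℝ} (hC : 0 < C)
    (hpos : ∀ᶠ y in atTop, 0 < f y) (h : ∀ᶠ y in atTop, f y ≤ C * y ^ a) :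
    limsup (fun y => ((log (f y) / log y : ℝ) : EReal)) atTop ≤ a := by
  rw [← (EReal.tendsto_coe.2 (tendsto_log_mul_rpow_div_log hC a)).limsup_eq]
  refine limsup_le_limsup ?_
  filter_upwards [hpos, h, eventually_gt_atTop 1] with y hy0 hy hy1
  exact EReal.coe_le_coe_iff.2
    (div_le_div_of_nonneg_right (log_le_log hy0 hy) (log_pos hy1).le)

lemma EReal.tendsto_of_forall_le_liminf_of_forall_limsup_le {α : Type*} {l : Filter α}
    {u : α → EReal} {M : EReal} (hlow : ∀ b : ℝ, (b : EReal) < M → (b : EReal) ≤ liminf u l)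
    (hup : ∀ a : ℝ, M < a → limsup u l ≤ a) : Tendsto u l (𝓝 M) :=
  tendsto_of_le_liminf_of_limsup_le (EReal.ge_of_forall_gt_iff_ge.1 hlow)
    (EReal.le_of_forall_lt_iff_le.1 hup)

namespace MeasureTheory

variable {I : Type*} [MeasurableSpace I] {ι : Measure I}

lemma exists_nat_measure_inter_setOf_lt_ne_zero {s : Set I} (hs : ι s ≠ 0) (g : I → ℝ) :
    ∃ n : ℕ, ι (s ∩ {i | g i < n}) ≠ 0 := by
  by_contra! h
  refine hs (measure_mono_null (fun i hi => ?_) (measure_iUnion_null h))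
  obtain ⟨n, hn⟩ := exists_nat_gt (g i)
  exact mem_iUnion.2 ⟨n, hi, hn⟩

lemma measure_setOf_lt_ne_zero_of_lt_essSup {ξ : I → ℝ} {b : ℝ}
    (hb : (b : EReal) < essSup (fun i => (ξ i : EReal)) ι) : ι {i | b < ξ i} ≠ 0 := by
  intro h0
  refine hb.not_ge (essSup_le_of_ae_le _ ?_)
  rw [EventuallyLE, ae_iff]
  simpa using h0

lemma setIntegral_pos_of_pos {ζ : I → ℝ} {s : Set I} (hζ0 : ∀ i, 0 < ζ i)
    (hζint : IntegrableOn ζ s ι) (hs : ι s ≠ 0) : 0 < ∫ i in s, ζ i ∂ι := by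
  rw [setIntegral_pos_iff_support_of_nonneg_ae (ae_of_all _ fun i => (hζ0 i).le) hζint,
    Function.support_eq_univ fun i => (hζ0 i).ne', univ_inter]
  exact pos_iff_ne_zero.2 hs

variable {η ζ ξ : I → ℝ}

lemma eventually_mul_rpow_le_integral_indicator (hηm : Measurable η) (hξm : Measurable ξ)
    (hζ0 : ∀ i, 0 < ζ i) (hζint : Integrable ζ ι)
    (hint : ∀ y > (0 : ℝ), Integrable ({i | η i < y}.indicator fun i => ζ i * y ^ ξ i) ι)
    {b : ℝ} (hb : ι {i | b < ξ i} ≠ 0) :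
    ∃ c > 0, ∀ᶠ y in atTop,
      c * y ^ b ≤ ∫ i, {i | η i < y}.indicator (fun i => ζ i * y ^ ξ i) i ∂ι := by
  obtain ⟨n, hn⟩ := exists_nat_measure_inter_setOf_lt_ne_zero hb η
  set B := {i | b < ξ i} ∩ {i | η i < (n : ℝ)}
  have hB : MeasurableSet B :=
    (measurableSet_lt measurable_const hξm).inter (measurableSet_lt hηm measurable_const)
  refine ⟨∫ i in B, ζ i ∂ι, setIntegral_pos_of_pos hζ0 hζint.integrableOn hn, ?_⟩
  filter_upwards [eventually_ge_atTop (max (n : ℝ) 1)] with y hy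
  have hy1 : 1 ≤ y := le_of_max_le_right hy
  have hyn : (n : ℝ) ≤ y := le_of_max_le_left hy
  have hle : B.indicator (fun i => ζ i * y ^ b) ≤
      {i | η i < y}.indicator (fun i => ζ i * y ^ ξ i) := fun i =>
    calc B.indicator (fun i => ζ i * y ^ b) i ≤ B.indicator (fun i => ζ i * y ^ ξ i) i :=
          indicator_le_indicator' fun hi =>
            mul_le_mul_of_nonneg_left (rpow_le_rpow_of_exponent_le hy1 hi.1.le) (hζ0 i).le
      _ ≤ _ := indicator_le_indicator_of_subset (fun i hi => hi.2.trans_le hyn)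
          (fun i => (mul_pos (hζ0 i) (rpow_pos_of_pos (by linarith) _)).le) i
  calc (∫ i in B, ζ i ∂ι) * y ^ b = ∫ i, B.indicator (fun i => ζ i * y ^ b) i ∂ι := by
        rw [integral_indicator hB, integral_mul_const]
    _ ≤ _ := integral_mono ((hζint.mul_const _).indicator hB) (hint y (by linarith)) hle

lemma integral_indicator_mul_rpow_le (hζ0 : ∀ i, 0 ≤ ζ i) (hζint : Integrable ζ ι)
    {s : Set I} {y a : ℝ} (hy : 1 ≤ y)
    (hint : Integrable (s.indicator fun i => ζ i * y ^ ξ i) ι) (ha : ∀ᵐ i ∂ι, ξ i ≤ a) :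
    ∫ i, s.indicator (fun i => ζ i * y ^ ξ i) i ∂ι ≤ (∫ i, ζ i ∂ι) * y ^ a := by
  rw [← integral_mul_const]
  refine integral_mono_ae hint (hζint.mul_const _) ?_
  filter_upwards [ha] with i hi
  have hmono : ζ i * y ^ ξ i ≤ ζ i * y ^ a :=
    mul_le_mul_of_nonneg_left (rpow_le_rpow_of_exponent_le hy hi) (hζ0 i)
  by_cases his : i ∈ s
  · simpa [his] using hmono
  · simpa [his] using (mul_nonneg (hζ0 i) (rpow_nonneg (by linarith) _)).trans hmono

end MeasureTheory

theorem statement0_general {I : Type*} [MeasurableSpace I] (ι : Measure I)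
    (hι : ι ≠ 0)
    (η ζ ξ : I → ℝ) (hηm : Measurable η) (hξm : Measurable ξ)
    (hζ0 : ∀ i, 0 < ζ i)
    (hζint : Integrable ζ ι)
    (O : ℝ → ℝ)
    (hO : ∀ y > (0:ℝ), O y =
      ∫ i, Set.indicator {i | η i < y} (fun i => ζ i * y ^ ξ i) i ∂ι)
    (hOint : ∀ y > (0:ℝ),
      Integrable (Set.indicator {i | η i < y} (fun i => ζ i * y ^ ξ i)) ι) :
    Tendsto (fun y : ℝ => ((Real.log (O y) / Real.log y : ℝ) : EReal)) atTop
      (nhds (essSup (fun i => (ξ i : EReal)) ι)) := by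
  have hlow : ∀ b : ℝ, ι {i | b < ξ i} ≠ 0 → ∃ c > 0, ∀ᶠ y in atTop, c * y ^ b ≤ O y := by
    intro b hb
    obtain ⟨c, hc, h⟩ := eventually_mul_rpow_le_integral_indicator hηm hξm hζ0 hζint hOint hb
    refine ⟨c, hc, ?_⟩
    filter_upwards [h, eventually_gt_atTop 0] with y hy hy0
    rwa [hO y hy0]
  have hι' : ι univ ≠ 0 := Measure.measure_univ_ne_zero.2 hι
  -- `ξ` is real-valued, so `ξ > -n` on a set of positive measure; hence `O` is eventually positive.
  obtain ⟨n, hn⟩ := exists_nat_measure_inter_setOf_lt_ne_zero hι' (-ξ)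
  obtain ⟨c₀, hc₀, hO₀⟩ := hlow (-n) (by simpa [neg_lt] using hn)
  have hOpos : ∀ᶠ y in atTop, 0 < O y := by
    filter_upwards [hO₀, eventually_gt_atTop 0] with y hy hy0
    exact (mul_pos hc₀ (rpow_pos_of_pos hy0 _)).trans_le hy
  refine EReal.tendsto_of_forall_le_liminf_of_forall_limsup_le (fun b hb => ?_) fun a ha => ?_
  · obtain ⟨c, hc, h⟩ := hlow b (measure_setOf_lt_ne_zero_of_lt_essSup hb)
    exact le_liminf_log_div_log hc h
  · have hξa : ∀ᵐ i ∂ι, ξ i ≤ a :=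
      (ae_lt_of_essSup_lt ha).mono fun i hi => EReal.coe_le_coe_iff.1 hi.le
    have hC : 0 < ∫ i, ζ i ∂ι := by
      simpa using setIntegral_pos_of_pos hζ0 hζint.integrableOn hι'
    refine limsup_log_div_log_le hC hOpos ?_
    filter_upwards [eventually_ge_atTop 1] with y hy
    rw [hO y (by linarith)]
    exact integral_indicator_mul_rpow_le (fun i => (hζ0 i).le) hζint hy
      (hOint y (by linarith)) hξa

/-- Let (I, 𝓘, ι) be a σ-finite measure space with ι ≠ 0, and let
η : I → [0,∞), ζ : I → (0,∞) and ξ : I → ℝ be measurable with ∫ ζ dι < ∞ and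
O(y) := ∫ 1_{η_i < y} ζ_i y^{ξ_i} ι(di) < ∞ for every y > 0.  Then
lim_{y→∞} ln O(y) / ln y = ι-ess sup ξ in the extended real line. -/
theorem statement0 {I : Type*} [MeasurableSpace I] (ι : Measure I) [SigmaFinite ι]
    (hι : ι ≠ 0)
    (η ζ ξ : I → ℝ) (hηm : Measurable η) (hζm : Measurable ζ) (hξm : Measurable ξ)
    (hη0 : ∀ i, 0 ≤ η i) (hζ0 : ∀ i, 0 < ζ i)
    (hζint : Integrable ζ ι)
    (O : ℝ → ℝ)
    (hO : ∀ y > (0:ℝ), O y =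
      ∫ i, Set.indicator {i | η i < y} (fun i => ζ i * y ^ ξ i) i ∂ι)
    (hOint : ∀ y > (0:ℝ),
      Integrable (Set.indicator {i | η i < y} (fun i => ζ i * y ^ ξ i)) ι) :
    Tendsto (fun y : ℝ => ((Real.log (O y) / Real.log y : ℝ) : EReal)) atTop
      (nhds (essSup (fun i => (ξ i : EReal)) ι)) :=
  statement0_general ι hι η ζ ξ hηm hξm hζ0 hζint O hO hOint
end

section
/- Let Ψ = {Ψ_i, i ∈ I} ∈ ℬ, define h(p̄) = p̄^{1+β} / ℐ[Ψ](p̄) with inverse h^{inv}, φ := ℐ[Ψ] ∘ h^{inv}, and Φ_i(x̄) := Ψ_i( (x̄ φ(x̄))^{1/(1+β)} ). Let X : [0,∞) → (0,∞) be any function such that X̄_t := sup_{0≤s≤t} X_s < ∞ for every t ≥ 0. Then there exists a unique function P : [0,∞) → (0,∞) with P̄_t := sup_{0≤s≤t} P_s < ∞ for all t and satisfying P_t^{1+β} = X_t · ℐ[Ψ](P̄_t) for all t ≥ 0, and it is given by P_t = ( X_t · ℐ[Φ](X̄_t) )^{1/(1+β)}. -/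
open MeasureTheory Filter Set

/-- The left derivative of a real function. -/
noncomputable def leftDeriv (f : ℝ → ℝ) (z : ℝ) : ℝ := derivWithin f (Set.Iio z) z

/-- `f` is a difference of two convex functions on `(0, ∞)`. -/
def IsDCC (f : ℝ → ℝ) : Prop :=
  ∃ f₁ f₂ : ℝ → ℝ, ConvexOn ℝ (Set.Ioi (0:ℝ)) f₁ ∧ ConvexOn ℝ (Set.Ioi (0:ℝ)) f₂ ∧
    ∀ x ∈ Set.Ioi (0:ℝ), f x = f₁ x - f₂ x

/-- Membership in the class ℬ of families of expansion functions. -/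
def MemB {I : Type*} [MeasurableSpace I] (ι : Measure I) (α lam : I → ℝ)
    (𝒳 : I → ℝ → ℝ) : Prop :=
  Measurable (fun p : ℝ × I => 𝒳 p.2 p.1) ∧
  (∀ z > (0:ℝ), Integrable (fun i => lam i * (𝒳 i z) ^ (α i)) ι) ∧
  ∀ i, (∀ z > (0:ℝ), 0 < 𝒳 i z) ∧ IsDCC (𝒳 i) ∧
    Tendsto (𝒳 i) (nhdsWithin (0:ℝ) (Set.Ioi (0:ℝ))) (nhds 0) ∧
    Tendsto (𝒳 i) atTop atTop ∧
    ∀ z > (0:ℝ), 0 < leftDeriv (𝒳 i) z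

/-- The operator ℐ applied to a family 𝒳 ∈ ℬ:
`ℐ[𝒳](z) = ((1+β) ∫ λᵢ max(cᵢ^{αᵢ}, 𝒳ᵢ(z)^{αᵢ}) ι(di))^{-γ}`. -/
noncomputable def Iop {I : Type*} [MeasurableSpace I] (ι : Measure I) (β γ : ℝ)
    (c α lam : I → ℝ) (𝒳 : I → ℝ → ℝ) (z : ℝ) : ℝ :=
  ((1 + β) * ∫ i, lam i * max ((c i) ^ (α i)) ((𝒳 i z) ^ (α i)) ∂ι) ^ (-γ)

/-!
Write `J = ℐ[Ψ]`. Each `Ψᵢ` is increasing (on `[a, b]` a continuous function with positive left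
derivative attains its minimum at `a`), so `J` is positive and decreasing, `h p = p^{1+β} / J p` is
strictly increasing, and `hinv x` is the unique root `p` of `p^{1+β} = x J(p)`; in particular
`Φᵢ x = Ψᵢ (hinv x)` and `ℐ[Φ](x) = J(hinv x)`.

If `P` solves `P_t^{1+β} = X_t J(P̄_t)`, then for `s ≤ t` monotonicity of `J` gives
`h(P_s) ≤ X̄_t` and `X_s ≤ h(P̄_t)`, so `P̄_t = hinv(X̄_t)`, and substituting back gives
`P_t^{1+β} = X_t ℐ[Φ](X̄_t)`. Conversely the candidate `P*`, with
`P*_t^{1+β} = X_t J(hinv X̄_t)`, satisfies `P*_s ≤ hinv(X̄_s) ≤ hinv(X̄_t)` and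
`hinv(X̄_t)^{1+β} ≤ (P̄*_t)^{1+β}`, so again `P̄*_t = hinv(X̄_t)` and `P*` solves the equation.
-/

section RightInverse

variable {α β : Type*} [LinearOrder α] [Preorder β] {f : α → β} {g : β → α} {s : Set α}
  {t : Set β}

theorem StrictMonoOn.le_iff_le_of_rightInvOn (hf : StrictMonoOn f s) (hg : MapsTo g t s)
    (hfg : RightInvOn g f t) {a : α} {b : β} (ha : a ∈ s) (hb : b ∈ t) :
    a ≤ g b ↔ f a ≤ b := by
  rw [← hf.le_iff_le ha (hg hb), hfg hb]

theorem StrictMonoOn.le_iff_le_of_rightInvOn' (hf : StrictMonoOn f s) (hg : MapsTo g t s)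
    (hfg : RightInvOn g f t) {a : α} {b : β} (ha : a ∈ s) (hb : b ∈ t) :
    g b ≤ a ↔ b ≤ f a := by
  rw [← hf.le_iff_le (hg hb) ha, hfg hb]

theorem StrictMonoOn.monotoneOn_of_rightInvOn (hf : StrictMonoOn f s) (hg : MapsTo g t s)
    (hfg : RightInvOn g f t) : MonotoneOn g t := by
  intro x hx y hy hxy
  rw [hf.le_iff_le_of_rightInvOn hg hfg (hg hx) hy, hfg hx]
  exact hxy

end RightInverse

section RunningSupremum

variable {f : ℝ → ℝ} {s t : ℝ}

theorem sSup_image_Icc_pos (hf : ∀ s, 0 ≤ s → 0 < f s) (hbdd : BddAbove (f '' Icc 0 t))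
    (ht : 0 ≤ t) : 0 < sSup (f '' Icc 0 t) :=
  (hf t ht).trans_le (le_csSup hbdd (mem_image_of_mem f ⟨ht, le_rfl⟩))

theorem sSup_image_Icc_mono (hbdd : BddAbove (f '' Icc 0 t)) (hs : 0 ≤ s) (hst : s ≤ t) :
    sSup (f '' Icc 0 s) ≤ sSup (f '' Icc 0 t) :=
  csSup_le_csSup hbdd ((nonempty_Icc.2 hs).image f) (image_mono (Icc_subset_Icc_right hst))

end RunningSupremum

theorem monotoneOn_of_leftDeriv_pos {f : ℝ → ℝ} {s : Set ℝ} (hs : s.OrdConnected)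
    (hf : ContinuousOn f s) (hf' : ∀ z ∈ s, 0 < leftDeriv f z) : MonotoneOn f s := by
  intro a ha b hb hab
  have hsub : Icc a b ⊆ s := hs.out ha hb
  obtain ⟨m, hm, hmin⟩ := isCompact_Icc.exists_isMinOn (nonempty_Icc.2 hab) (hf.mono hsub)
  suffices m = a by simpa [this] using hmin (right_mem_Icc.2 hab)
  by_contra hma
  have ham : a < m := lt_of_le_of_ne hm.1 (Ne.symm hma)
  have hpos := hf' m (hsub hm)
  have hdiff : DifferentiableWithinAt ℝ f (Iio m) m := by
    by_contra hnd
    rw [leftDeriv, derivWithin_zero_of_not_differentiableWithinAt hnd] at hpos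
    exact lt_irrefl _ hpos
  -- Fermat's rule for the minimum of `f` on `[a, m]`, in the inward direction `a - m`
  have hder : HasDerivWithinAt f (leftDeriv f m) (Icc a m) m :=
    hdiff.hasDerivWithinAt.Iic_of_Iio.mono Icc_subset_Iic_self
  have hlocal : IsLocalMinOn f (Icc a m) m :=
    (hmin.on_subset (Icc_subset_Icc_right hm.2)).localize
  have hdir : a - m ∈ posTangentConeAt (Icc a m) m :=
    sub_mem_posTangentConeAt_of_segment_subset (segment_eq_Icc' m a ▸ by simp [ham.le])
  have := hlocal.hasFDerivWithinAt_nonneg hder.hasFDerivWithinAt hdir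
  simp only [ContinuousLinearMap.toSpanSingleton_apply, smul_eq_mul] at this
  nlinarith

theorem IsDCC.continuousOn {f : ℝ → ℝ} (hf : IsDCC f) : ContinuousOn f (Ioi 0) := by
  obtain ⟨f₁, f₂, h₁, h₂, heq⟩ := hf
  exact ((h₁.continuousOn isOpen_Ioi).sub (h₂.continuousOn isOpen_Ioi)).congr heq

theorem MemB.monotoneOn {I : Type*} [MeasurableSpace I] {ι : Measure I} {α lam : I → ℝ}
    {Ψ : I → ℝ → ℝ} (hΨ : MemB ι α lam Ψ) (i : I) : MonotoneOn (Ψ i) (Ioi 0) :=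
  monotoneOn_of_leftDeriv_pos ordConnected_Ioi (hΨ.2.2 i).2.1.continuousOn
    (hΨ.2.2 i).2.2.2.2

section Iop

variable {I : Type*} [MeasurableSpace I] {ι : Measure I} {β γ : ℝ} {c α lam : I → ℝ}
  {𝒳 : I → ℝ → ℝ}

theorem integrable_mul_max {a f g : I → ℝ} (ha : ∀ i, 0 ≤ a i)
    (hf : Integrable (fun i => a i * f i) ι) (hg : Integrable (fun i => a i * g i) ι) :
    Integrable (fun i => a i * max (f i) (g i)) ι := by
  have hmax : (fun i => a i * max (f i) (g i)) = (fun i => a i * f i) ⊔ fun i => a i * g i :=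
    funext fun i => mul_max_of_nonneg _ _ (ha i)
  exact hmax ▸ hf.sup hg

theorem integral_mul_max_rpow_pos (hlam : ∀ i, 0 ≤ lam i)
    (hκint : Integrable (fun i => lam i * c i ^ α i) ι)
    (hκpos : 0 < ∫ i, lam i * c i ^ α i ∂ι) {z : ℝ}
    (h𝒳 : Integrable (fun i => lam i * 𝒳 i z ^ α i) ι) :
    0 < ∫ i, lam i * max (c i ^ α i) (𝒳 i z ^ α i) ∂ι :=
  hκpos.trans_le <| integral_mono hκint (integrable_mul_max hlam hκint h𝒳) fun i =>
    mul_le_mul_of_nonneg_left (le_max_left _ _) (hlam i)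

theorem Iop_pos (hβ : 0 < 1 + β) (hlam : ∀ i, 0 ≤ lam i)
    (hκint : Integrable (fun i => lam i * c i ^ α i) ι)
    (hκpos : 0 < ∫ i, lam i * c i ^ α i ∂ι) {z : ℝ}
    (h𝒳 : Integrable (fun i => lam i * 𝒳 i z ^ α i) ι) :
    0 < Iop ι β γ c α lam 𝒳 z :=
  Real.rpow_pos_of_pos (mul_pos hβ (integral_mul_max_rpow_pos hlam hκint hκpos h𝒳)) _

theorem Iop_antitoneOn {s : Set ℝ} (hβ : 0 < 1 + β) (hγ : 0 ≤ γ) (hlam : ∀ i, 0 ≤ lam i)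
    (hα : ∀ i, 0 ≤ α i) (hκint : Integrable (fun i => lam i * c i ^ α i) ι)
    (hκpos : 0 < ∫ i, lam i * c i ^ α i ∂ι)
    (h𝒳int : ∀ z ∈ s, Integrable (fun i => lam i * 𝒳 i z ^ α i) ι)
    (h𝒳nonneg : ∀ i, ∀ z ∈ s, 0 ≤ 𝒳 i z) (h𝒳mono : ∀ i, MonotoneOn (𝒳 i) s) :
    AntitoneOn (Iop ι β γ c α lam 𝒳) s := by
  intro z₁ hz₁ z₂ hz₂ hz
  have hint (z) (hz : z ∈ s) := integrable_mul_max hlam hκint (h𝒳int z hz)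
  refine Real.rpow_le_rpow_of_nonpos
    (mul_pos hβ (integral_mul_max_rpow_pos hlam hκint hκpos (h𝒳int z₁ hz₁)))
    (mul_le_mul_of_nonneg_left ?_ hβ.le) (neg_nonpos.2 hγ)
  refine integral_mono (hint z₁ hz₁) (hint z₂ hz₂) fun i => ?_
  gcongr
  exacts [hlam i, h𝒳nonneg i z₁ hz₁, hα i, h𝒳mono i hz₁ hz₂ hz]

end Iop

section RpowEquation

variable {r : ℝ} {J q X P : ℝ → ℝ}

theorem strictMonoOn_rpow_div (hr : 0 < r) (hJ : ∀ p > 0, 0 < J p)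
    (hJanti : AntitoneOn J (Ioi 0)) : StrictMonoOn (fun p => p ^ r / J p) (Ioi 0) :=
  fun _ hp _ hp' hpp' => div_lt_div₀ (Real.rpow_lt_rpow (le_of_lt hp) hpp' hr)
    (hJanti hp hp' hpp'.le) (Real.rpow_nonneg (le_of_lt hp') r) (hJ _ hp')

theorem rpow_eq_mul_of_rightInvOn (hJ : ∀ p > 0, 0 < J p) (hq : MapsTo q (Ioi 0) (Ioi 0))
    (hqJ : RightInvOn q (fun p => p ^ r / J p) (Ioi 0)) {x : ℝ} (hx : 0 < x) :
    q x ^ r = x * J (q x) :=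
  (div_eq_iff (hJ _ (hq hx)).ne').1 (hqJ hx)

theorem sSup_image_Icc_eq_of_rpow_eq_mul_sSup (hr : 0 < r) (hJ : ∀ p > 0, 0 < J p)
    (hJanti : AntitoneOn J (Ioi 0)) (hq : MapsTo q (Ioi 0) (Ioi 0))
    (hqJ : RightInvOn q (fun p => p ^ r / J p) (Ioi 0)) (hX : ∀ t, 0 ≤ t → 0 < X t)
    (hXbdd : ∀ t, 0 ≤ t → BddAbove (X '' Icc 0 t)) (hP : ∀ t, 0 ≤ t → 0 < P t)
    (hPbdd : ∀ t, 0 ≤ t → BddAbove (P '' Icc 0 t))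
    (hPeq : ∀ t, 0 ≤ t → P t ^ r = X t * J (sSup (P '' Icc 0 t))) {t : ℝ} (ht : 0 ≤ t) :
    sSup (P '' Icc 0 t) = q (sSup (X '' Icc 0 t)) := by
  have hmono := strictMonoOn_rpow_div hr hJ hJanti
  have hXt : 0 < sSup (X '' Icc 0 t) := sSup_image_Icc_pos hX (hXbdd t ht) ht
  have hPt : 0 < sSup (P '' Icc 0 t) := sSup_image_Icc_pos hP (hPbdd t ht) ht
  have hPs_pos (s) (hs : s ∈ Icc 0 t) : 0 < sSup (P '' Icc 0 s) :=
    sSup_image_Icc_pos hP (hPbdd s hs.1) hs.1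
  refine le_antisymm (csSup_le ((nonempty_Icc.2 ht).image P) ?_) ?_
  · rintro _ ⟨s, hs, rfl⟩
    refine (hmono.le_iff_le_of_rightInvOn hq hqJ (hP s hs.1) hXt).2 ?_
    rw [div_le_iff₀ (hJ _ (hP s hs.1))]
    calc P s ^ r = X s * J (sSup (P '' Icc 0 s)) := hPeq s hs.1
      _ ≤ sSup (X '' Icc 0 t) * J (P s) :=
        mul_le_mul (le_csSup (hXbdd t ht) (mem_image_of_mem X hs))
          (hJanti (hP s hs.1) (hPs_pos s hs)
            (le_csSup (hPbdd s hs.1) (mem_image_of_mem P ⟨hs.1, le_rfl⟩)))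
          (hJ _ (hPs_pos s hs)).le hXt.le
  · refine (hmono.le_iff_le_of_rightInvOn' hq hqJ hPt hXt).2 ?_
    refine csSup_le ((nonempty_Icc.2 ht).image X) ?_
    rintro _ ⟨s, hs, rfl⟩
    rw [le_div_iff₀ (hJ _ hPt)]
    calc X s * J (sSup (P '' Icc 0 t)) ≤ X s * J (sSup (P '' Icc 0 s)) :=
          mul_le_mul_of_nonneg_left (hJanti (hPs_pos s hs) hPt
            (sSup_image_Icc_mono (hPbdd t ht) hs.1 hs.2)) (hX s hs.1).le
      _ = P s ^ r := (hPeq s hs.1).symm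
      _ ≤ sSup (P '' Icc 0 t) ^ r :=
          Real.rpow_le_rpow (hP s hs.1).le (le_csSup (hPbdd t ht) (mem_image_of_mem P hs)) hr.le

theorem sSup_image_Icc_eq_of_rpow_eq_mul_rightInvOn (hr : 0 < r) (hJ : ∀ p > 0, 0 < J p)
    (hJanti : AntitoneOn J (Ioi 0)) (hq : MapsTo q (Ioi 0) (Ioi 0))
    (hqJ : RightInvOn q (fun p => p ^ r / J p) (Ioi 0)) (hX : ∀ t, 0 ≤ t → 0 < X t)
    (hXbdd : ∀ t, 0 ≤ t → BddAbove (X '' Icc 0 t)) (hP : ∀ t, 0 ≤ t → 0 ≤ P t)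
    (hPeq : ∀ t, 0 ≤ t → P t ^ r = X t * J (q (sSup (X '' Icc 0 t)))) {t : ℝ} (ht : 0 ≤ t) :
    BddAbove (P '' Icc 0 t) ∧ sSup (P '' Icc 0 t) = q (sSup (X '' Icc 0 t)) := by
  have hqmono := (strictMonoOn_rpow_div hr hJ hJanti).monotoneOn_of_rightInvOn hq hqJ
  have hXt : 0 < sSup (X '' Icc 0 t) := sSup_image_Icc_pos hX (hXbdd t ht) ht
  have hXs_pos (s) (hs : s ∈ Icc 0 t) : 0 < sSup (X '' Icc 0 s) :=
    sSup_image_Icc_pos hX (hXbdd s hs.1) hs.1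
  have hPle (s) (hs : s ∈ Icc 0 t) : P s ≤ q (sSup (X '' Icc 0 t)) := by
    refine le_trans ?_
      (hqmono (hXs_pos s hs) hXt (sSup_image_Icc_mono (hXbdd t ht) hs.1 hs.2))
    rw [← Real.rpow_le_rpow_iff (hP s hs.1) (hq (hXs_pos s hs)).le hr,
      rpow_eq_mul_of_rightInvOn hJ hq hqJ (hXs_pos s hs), hPeq s hs.1]
    exact mul_le_mul_of_nonneg_right
      (le_csSup (hXbdd s hs.1) (mem_image_of_mem X ⟨hs.1, le_rfl⟩)) (hJ _ (hq (hXs_pos s hs))).le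
  have hPbdd : BddAbove (P '' Icc 0 t) := ⟨_, forall_mem_image.2 hPle⟩
  refine ⟨hPbdd, le_antisymm (csSup_le ((nonempty_Icc.2 ht).image P) ?_) ?_⟩
  · exact forall_mem_image.2 hPle
  have hPt : 0 ≤ sSup (P '' Icc 0 t) :=
    (hP t ht).trans (le_csSup hPbdd (mem_image_of_mem P ⟨ht, le_rfl⟩))
  have hJqt := hJ _ (hq hXt)
  rw [← Real.rpow_le_rpow_iff (hq hXt).le hPt hr, rpow_eq_mul_of_rightInvOn hJ hq hqJ hXt,
    ← le_div_iff₀ hJqt]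
  refine csSup_le ((nonempty_Icc.2 ht).image X) ?_
  rintro _ ⟨s, hs, rfl⟩
  rw [le_div_iff₀ hJqt]
  calc X s * J (q (sSup (X '' Icc 0 t))) ≤ X s * J (q (sSup (X '' Icc 0 s))) :=
        mul_le_mul_of_nonneg_left (hJanti (hq (hXs_pos s hs)) (hq hXt)
          (hqmono (hXs_pos s hs) hXt (sSup_image_Icc_mono (hXbdd t ht) hs.1 hs.2)))
          (hX s hs.1).le
    _ = P s ^ r := (hPeq s hs.1).symm
    _ ≤ sSup (P '' Icc 0 t) ^ r :=
        Real.rpow_le_rpow (hP s hs.1) (le_csSup hPbdd (mem_image_of_mem P hs)) hr.le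

end RpowEquation

theorem statement6_general
    {I : Type*} [MeasurableSpace I] (ι : Measure I)
    (β γ : ℝ) (hβ : 0 < β) (hγ : γ ∈ Set.Ioo (0:ℝ) 1)
    (c α lam : I → ℝ)
    (hαmem : ∀ i, α i ∈ Set.Ioo (0:ℝ) 1) (hlampos : ∀ i, 0 < lam i)
    (hκint : Integrable (fun i => lam i * (c i) ^ (α i)) ι)
    (hκpos : 0 < ∫ i, lam i * (c i) ^ (α i) ∂ι)
    (Ψ : I → ℝ → ℝ) (hΨ : MemB ι α lam Ψ)
    (h : ℝ → ℝ)
    (hh : ∀ p > (0:ℝ), h p = p ^ (1 + β) / Iop ι β γ c α lam Ψ p)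
    (hinv : ℝ → ℝ)
    (hinv_right : ∀ x > (0:ℝ), 0 < hinv x ∧ h (hinv x) = x)
    (φ : ℝ → ℝ) (hφ : ∀ x > (0:ℝ), φ x = Iop ι β γ c α lam Ψ (hinv x))
    (Φ : I → ℝ → ℝ)
    (hΦ : ∀ i, ∀ x > (0:ℝ), Φ i x = Ψ i ((x * φ x) ^ (1 / (1 + β))))
    (X : ℝ → ℝ)
    (hXpos : ∀ t, 0 ≤ t → 0 < X t)
    (hXbdd : ∀ t, 0 ≤ t → BddAbove (X '' Set.Icc 0 t))
    (Pstar : ℝ → ℝ)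
    (hPstar : ∀ t, 0 ≤ t →
      Pstar t = (X t * Iop ι β γ c α lam Φ (sSup (X '' Set.Icc 0 t))) ^ (1 / (1 + β))) :
    (∀ t, 0 ≤ t → 0 < Pstar t) ∧
    (∀ t, 0 ≤ t → BddAbove (Pstar '' Set.Icc 0 t)) ∧
    (∀ t, 0 ≤ t →
      (Pstar t) ^ (1 + β) = X t * Iop ι β γ c α lam Ψ (sSup (Pstar '' Set.Icc 0 t))) ∧
    ∀ P : ℝ → ℝ,
      (∀ t, 0 ≤ t → 0 < P t) →
      (∀ t, 0 ≤ t → BddAbove (P '' Set.Icc 0 t)) →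
      (∀ t, 0 ≤ t →
        (P t) ^ (1 + β) = X t * Iop ι β γ c α lam Ψ (sSup (P '' Set.Icc 0 t))) →
      ∀ t, 0 ≤ t → P t = Pstar t := by
  set J := Iop ι β γ c α lam Ψ
  have hr : 0 < 1 + β := by linarith
  have hlam i : 0 ≤ lam i := (hlampos i).le
  have hJ : ∀ p > 0, 0 < J p := fun p hp => Iop_pos hr hlam hκint hκpos (hΨ.2.1 p hp)
  have hJanti : AntitoneOn J (Ioi 0) := Iop_antitoneOn hr hγ.1.le hlam (fun i => (hαmem i).1.le)
    hκint hκpos hΨ.2.1 (fun i z hz => ((hΨ.2.2 i).1 z hz).le) hΨ.monotoneOn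
  have hq : MapsTo hinv (Ioi 0) (Ioi 0) := fun x hx => (hinv_right x hx).1
  have hqJ : RightInvOn hinv (fun p => p ^ (1 + β) / J p) (Ioi 0) := fun x hx =>
    (hh _ (hinv_right x hx).1).symm.trans (hinv_right x hx).2
  have hXt (t) (ht : 0 ≤ t) : 0 < sSup (X '' Icc 0 t) := sSup_image_Icc_pos hXpos (hXbdd t ht) ht
  have hIΦ : ∀ x > 0, Iop ι β γ c α lam Φ x = J (hinv x) := fun x hx => by
    have hΦΨ i : Φ i x = Ψ i (hinv x) := by
      rw [hΦ i x hx, hφ x hx, ← rpow_eq_mul_of_rightInvOn hJ hq hqJ hx, one_div,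
        Real.rpow_rpow_inv (hq hx).le hr.ne']
    simp only [Iop, hΦΨ, J]
  have hPstar_pos (t) (ht : 0 ≤ t) : 0 < Pstar t := by
    rw [hPstar t ht, hIΦ _ (hXt t ht)]
    exact Real.rpow_pos_of_pos (mul_pos (hXpos t ht) (hJ _ (hq (hXt t ht)))) _
  have hPstar_rpow (t) (ht : 0 ≤ t) :
      Pstar t ^ (1 + β) = X t * J (hinv (sSup (X '' Icc 0 t))) := by
    rw [hPstar t ht, hIΦ _ (hXt t ht), one_div, Real.rpow_inv_rpow
      (mul_nonneg (hXpos t ht).le (hJ _ (hq (hXt t ht))).le) hr.ne']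
  have hPstar_sup (t) (ht : 0 ≤ t) := sSup_image_Icc_eq_of_rpow_eq_mul_rightInvOn hr hJ hJanti
    hq hqJ hXpos hXbdd (fun t ht => (hPstar_pos t ht).le) hPstar_rpow ht
  refine ⟨hPstar_pos, fun t ht => (hPstar_sup t ht).1,
    fun t ht => (hPstar_sup t ht).2 ▸ hPstar_rpow t ht, ?_⟩
  intro P hP hPbdd hPeq t ht
  have hP_sup := sSup_image_Icc_eq_of_rpow_eq_mul_sSup hr hJ hJanti hq hqJ hXpos hXbdd hP hPbdd
    hPeq ht
  refine (Real.rpow_left_inj (hP t ht).le (hPstar_pos t ht).le hr.ne').1 ?_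
  rw [hPeq t ht, hP_sup, hPstar_rpow t ht]

/-- With Ψ ∈ ℬ, h, hinv, φ and Φ as in Theorem 5.2, let X : [0,∞) → (0,∞)
be any function whose running supremum X̄ is finite.  Then there is a unique positive
function P on [0,∞) with finite running supremum P̄ satisfying
P_t^{1+β} = X_t ℐ[Ψ](P̄_t) for all t ≥ 0, namely P_t = (X_t ℐ[Φ](X̄_t))^{1/(1+β)}. -/
theorem statement6
    {I : Type*} [MeasurableSpace I] (ι : Measure I) [SigmaFinite ι]
    (β γ : ℝ) (hβ : 0 < β) (hγ : γ ∈ Set.Ioo (0:ℝ) 1)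
    (c α lam : I → ℝ) (hcm : Measurable c) (hαm : Measurable α) (hlamm : Measurable lam)
    (hcpos : ∀ i, 0 < c i) (hαmem : ∀ i, α i ∈ Set.Ioo (0:ℝ) 1) (hlampos : ∀ i, 0 < lam i)
    (hκint : Integrable (fun i => lam i * (c i) ^ (α i)) ι)
    (hκpos : 0 < ∫ i, lam i * (c i) ^ (α i) ∂ι)
    (Ψ : I → ℝ → ℝ) (hΨ : MemB ι α lam Ψ)
    (h : ℝ → ℝ)
    (hh : ∀ p > (0:ℝ), h p = p ^ (1 + β) / Iop ι β γ c α lam Ψ p)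
    (hinv : ℝ → ℝ)
    (hinv_left : ∀ p > (0:ℝ), hinv (h p) = p)
    (hinv_right : ∀ x > (0:ℝ), 0 < hinv x ∧ h (hinv x) = x)
    (φ : ℝ → ℝ) (hφ : ∀ x > (0:ℝ), φ x = Iop ι β γ c α lam Ψ (hinv x))
    (Φ : I → ℝ → ℝ)
    (hΦ : ∀ i, ∀ x > (0:ℝ), Φ i x = Ψ i ((x * φ x) ^ (1 / (1 + β))))
    (X : ℝ → ℝ)
    (hXpos : ∀ t, 0 ≤ t → 0 < X t)
    (hXbdd : ∀ t, 0 ≤ t → BddAbove (X '' Set.Icc 0 t))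
    (Pstar : ℝ → ℝ)
    (hPstar : ∀ t, 0 ≤ t →
      Pstar t = (X t * Iop ι β γ c α lam Φ (sSup (X '' Set.Icc 0 t))) ^ (1 / (1 + β))) :
    (∀ t, 0 ≤ t → 0 < Pstar t) ∧
    (∀ t, 0 ≤ t → BddAbove (Pstar '' Set.Icc 0 t)) ∧
    (∀ t, 0 ≤ t →
      (Pstar t) ^ (1 + β) = X t * Iop ι β γ c α lam Ψ (sSup (Pstar '' Set.Icc 0 t))) ∧
    ∀ P : ℝ → ℝ,
      (∀ t, 0 ≤ t → 0 < P t) →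
      (∀ t, 0 ≤ t → BddAbove (P '' Set.Icc 0 t)) →
      (∀ t, 0 ≤ t →
        (P t) ^ (1 + β) = X t * Iop ι β γ c α lam Ψ (sSup (P '' Set.Icc 0 t))) →
      ∀ t, 0 ≤ t → P t = Pstar t :=
  statement6_general ι β γ hβ hγ c α lam hαmem hlampos hκint hκpos Ψ hΨ h hh hinv hinv_right φ hφ Φ
    hΦ X hXpos hXbdd Pstar hPstar
end

section
/- Let K : I → (0,∞) be 𝓘-measurable and suppose the family Ψ = {Ψ_i, i ∈ I} with Ψ_i(p̄) = K_i p̄^{(1+β)/(1−α_i)} belongs to ℬ. Assume ᾱ := ι-ess sup α ∈ (0,1) and set ψ := ℐ[Ψ]. Then lim_{p̄↑∞} (ln ψ(p̄)) / (ln p̄) = −ᾱ(1+β)γ/(1−ᾱ), and lim_{p̄↑∞} (ln(−ψ′₋(p̄))) / (ln p̄) = −ᾱ(1+β)γ/(1−ᾱ) − 1. -/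
open MeasureTheory Filter Set

/-!
With `p = eᵗ` one has `λᵢ Ψᵢ(p)^{αᵢ} = λᵢ Kᵢ^{αᵢ} e^{sᵢ t}` where `sᵢ = (1+β)αᵢ/(1-αᵢ)`, so
`ψ(p) = ((1+β) G(log p))^{-γ}` for `G(t) = ∫ max(λᵢ cᵢ^{αᵢ}, λᵢ Kᵢ^{αᵢ} e^{sᵢ t}) dι`.
This `G` is convex, and its exponential growth rate `log G(t) / t` tends to
`ess sup s = (1+β)ᾱ/(1-ᾱ)`: the set where `sᵢ` is close to the essential supremum has positive
measure. Convexity squeezes the left derivative of `G` between the slopes of `G` over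
`[t/2, t]` and `[t, t+1]`, so it has the same growth rate, and the chain rule through
`x ↦ x^{-γ}` and `log` gives both limits.
-/

open Real Topology

lemma tendsto_log_mul_exp_div_self {C : ℝ} (hC : 0 < C) (θ : ℝ) :
    Tendsto (fun t => log (C * exp (θ * t)) / t) atTop (𝓝 θ) := by
  have h : Tendsto (fun t => log C / t + θ) atTop (𝓝 (0 + θ)) :=
    (tendsto_const_nhds.div_atTop tendsto_id).add_const θ
  rw [zero_add] at h
  refine h.congr' ?_
  filter_upwards [eventually_ne_atTop 0] with t ht
  rw [log_mul hC.ne' (exp_pos _).ne', log_exp]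
  field_simp

lemma tendsto_log_div_self_of_exp_bounds {G : ℝ → ℝ} {θ : ℝ}
    (hlow : ∀ θ' < θ, ∃ ε > 0, ∀ᶠ t in atTop, ε * exp (θ' * t) ≤ G t)
    (hup : ∃ C > 0, ∀ᶠ t in atTop, G t ≤ C * exp (θ * t)) :
    Tendsto (fun t => log (G t) / t) atTop (𝓝 θ) := by
  obtain ⟨ε₀, hε₀, hG₀⟩ := hlow (θ - 1) (by linarith)
  have hpos : ∀ᶠ t in atTop, 0 < G t :=
    hG₀.mono fun t ht => (mul_pos hε₀ (exp_pos _)).trans_le ht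
  refine tendsto_order.2 ⟨fun a ha => ?_, fun b hb => ?_⟩
  · obtain ⟨ε, hε, hG⟩ := hlow ((a + θ) / 2) (by linarith)
    have hmid : a < (a + θ) / 2 := by linarith
    filter_upwards [(tendsto_log_mul_exp_div_self hε _).eventually (lt_mem_nhds hmid),
      hG, eventually_gt_atTop 0] with t hlt hle ht
    exact hlt.trans_le (div_le_div_of_nonneg_right (log_le_log (by positivity) hle) ht.le)
  · obtain ⟨C, hC, hG⟩ := hup
    filter_upwards [(tendsto_log_mul_exp_div_self hC θ).eventually (gt_mem_nhds hb),
      hG, hpos, eventually_gt_atTop 0] with t hlt hle hGt ht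
    exact (div_le_div_of_nonneg_right (log_le_log hGt hle) ht.le).trans_lt hlt

lemma ConvexOn.tendsto_log_leftDeriv_div_self {G : ℝ → ℝ} {θ : ℝ} (hG : ConvexOn ℝ univ G)
    (hθ : 0 < θ) (hpos : ∀ᶠ t in atTop, 0 < G t)
    (hlim : Tendsto (fun t => log (G t) / t) atTop (𝓝 θ)) :
    (∀ᶠ t in atTop, 0 < leftDeriv G t) ∧
      Tendsto (fun t => log (leftDeriv G t) / t) atTop (𝓝 θ) := by
  have hhalf : Tendsto (fun t : ℝ => t / 2) atTop atTop := tendsto_id.atTop_div_const two_pos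
  -- `log G t - log G (t/2)` grows like `θ t / 2`, so eventually `G t ≥ 2 G (t/2)`.
  have hgap : Tendsto (fun t => t * (log (G t) / t - log (G (t / 2)) / (t / 2) / 2)) atTop atTop :=
    tendsto_id.atTop_mul_pos (by linarith : 0 < θ - θ / 2)
      (hlim.sub ((hlim.comp hhalf).div_const 2))
  have hdouble : ∀ᶠ t in atTop, 2 * G (t / 2) ≤ G t := by
    filter_upwards [hgap.eventually_ge_atTop (log 2), hpos, hhalf.eventually hpos,
      eventually_gt_atTop 0] with t hgt hGt hGt2 ht
    have hlog : log 2 + log (G (t / 2)) ≤ log (G t) := by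
      field_simp at hgt
      linarith
    rw [← log_mul two_ne_zero hGt2.ne'] at hlog
    exact (log_le_log_iff (by positivity) hGt).1 hlog
  have hlower : ∀ᶠ t in atTop, G t / t ≤ leftDeriv G t := by
    filter_upwards [hdouble, eventually_gt_atTop 0] with t hd ht
    calc G t / t ≤ slope G (t / 2) t := by
          rw [slope_def_field, div_le_div_iff₀ ht (by linarith)]
          nlinarith
      _ ≤ leftDeriv G t := hG.slope_le_leftDeriv_of_mem_interior (by simp) (by simp) (by linarith)
  have hupper : ∀ᶠ t in atTop, leftDeriv G t ≤ G (t + 1) := by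
    filter_upwards [hpos] with t hGt
    calc leftDeriv G t ≤ slope G t (t + 1) :=
          (hG.leftDeriv_le_rightDeriv_of_mem_interior (by simp)).trans
            (hG.rightDeriv_le_slope_of_mem_interior (by simp) (by simp) (by linarith))
      _ ≤ G (t + 1) := by
          rw [slope_def_field, add_sub_cancel_left, div_one]
          linarith
  have hderiv_pos : ∀ᶠ t in atTop, 0 < leftDeriv G t := by
    filter_upwards [hlower, hpos, eventually_gt_atTop 0] with t h hGt ht
    exact (div_pos hGt ht).trans_le h
  refine ⟨hderiv_pos, tendsto_of_tendsto_of_tendsto_of_le_of_le'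
    (g := fun t => log (G t) / t - log t / t)
    (h := fun t => log (G (t + 1)) / (t + 1) * (1 + t⁻¹)) ?_ ?_ ?_ ?_⟩
  · simpa using hlim.sub Real.isLittleO_log_id_atTop.tendsto_div_nhds_zero
  · simpa using (hlim.comp (tendsto_atTop_add_const_right _ 1 tendsto_id)).mul
      (tendsto_inv_atTop_zero.const_add 1)
  · filter_upwards [hlower, hpos, eventually_gt_atTop 0] with t h hGt ht
    rw [← sub_div, ← log_div hGt.ne' ht.ne']
    exact div_le_div_of_nonneg_right (log_le_log (div_pos hGt ht) h) ht.le
  · filter_upwards [hupper, hderiv_pos, eventually_gt_atTop 0] with t h hg ht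
    have : log (G (t + 1)) / (t + 1) * (1 + t⁻¹) = log (G (t + 1)) / t := by
      field_simp
    rw [this]
    exact div_le_div_of_nonneg_right (log_le_log hg h) ht.le

lemma ConvexOn.leftDeriv_eq_of_eq_rpow_comp_log {ψ F : ℝ → ℝ} {k r p : ℝ}
    (hF : ConvexOn ℝ univ F) (hψ : ∀ q > 0, ψ q = (k * F (log q)) ^ r) (hp : 0 < p)
    (hpos : 0 < k * F (log p)) :
    leftDeriv ψ p = k * (leftDeriv F (log p) * p⁻¹) * r * (k * F (log p)) ^ (r - 1) := by
  have hFlog : HasDerivWithinAt (fun q => F (log q)) (leftDeriv F (log p) * p⁻¹)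
      (Iio p ∩ Ioi 0) p :=
    (hF.hasDerivWithinAt_leftDeriv_of_mem_interior (by simp)).comp p
      (hasDerivAt_log hp.ne').hasDerivWithinAt fun q hq => log_lt_log hq.2 hq.1
  rw [hasDerivWithinAt_inter (Ioi_mem_nhds hp)] at hFlog
  have hψeq : ψ =ᶠ[𝓝[Iio p] p] fun q => (k * F (log q)) ^ r :=
    eventually_nhdsWithin_of_eventually_nhds (eventually_of_mem (Ioi_mem_nhds hp) hψ)
  exact (((hFlog.const_mul k).rpow_const (Or.inl hpos.ne')).congr_of_eventuallyEq hψeq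
    (hψ p hp)).derivWithin (uniqueDiffWithinAt_Iio p)

theorem ConvexOn.tendsto_log_div_log_of_eq_rpow_comp_log {ψ F : ℝ → ℝ} {k γ θ : ℝ}
    (hF : ConvexOn ℝ univ F) (hk : 0 < k) (hγ : 0 < γ) (hθ : 0 < θ)
    (hFpos : ∀ᶠ t in atTop, 0 < F t) (hlim : Tendsto (fun t => log (F t) / t) atTop (𝓝 θ))
    (hψ : ∀ p > 0, ψ p = (k * F (log p)) ^ (-γ)) :
    Tendsto (fun p => log (ψ p) / log p) atTop (𝓝 (-γ * θ)) ∧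
      Tendsto (fun p => log (-leftDeriv ψ p) / log p) atTop (𝓝 (-γ * θ - 1)) := by
  obtain ⟨hgpos, hglim⟩ := hF.tendsto_log_leftDeriv_div_self hθ hFpos hlim
  have hconst : ∀ c : ℝ, Tendsto (fun t => c / t) atTop (𝓝 0) :=
    fun c => tendsto_const_nhds.div_atTop tendsto_id
  have hev : ∀ᶠ p in atTop, 0 < p ∧ 0 < log p ∧ 0 < F (log p) ∧ 0 < leftDeriv F (log p) :=
    (eventually_gt_atTop 0).and <| tendsto_log_atTop.eventually <|
      (eventually_gt_atTop 0).and (hFpos.and hgpos)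
  constructor
  · have h := (((hconst (log k)).add hlim).const_mul (-γ)).comp tendsto_log_atTop
    rw [zero_add] at h
    refine h.congr' ?_
    filter_upwards [hev] with p ⟨hp, ht, hFp, _⟩
    simp only [Function.comp_apply]
    rw [hψ p hp, log_rpow (mul_pos hk hFp), log_mul hk.ne' hFp.ne']
    field_simp
  · have h := ((((hconst (log γ + log k)).add hglim).sub_const 1).add
      (((hconst (log k)).add hlim).const_mul (-γ - 1))).comp tendsto_log_atTop
    rw [show 0 + θ - 1 + (-γ - 1) * (0 + θ) = -γ * θ - 1 by ring] at h
    refine h.congr' ?_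
    filter_upwards [hev] with p ⟨hp, ht, hFp, hgp⟩
    have hkF := mul_pos hk hFp
    simp only [Function.comp_apply]
    rw [hF.leftDeriv_eq_of_eq_rpow_comp_log hψ hp hkF,
      show -(k * (leftDeriv F (log p) * p⁻¹) * -γ * (k * F (log p)) ^ (-γ - 1)) =
        γ * k * leftDeriv F (log p) * p⁻¹ * (k * F (log p)) ^ (-γ - 1) by ring,
      log_mul (by positivity) (by positivity), log_mul (by positivity) (by positivity),
      log_mul (by positivity) (by positivity), log_mul (by positivity) (by positivity),
      log_inv, log_rpow hkF, log_mul hk.ne' hFp.ne']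
    field_simp
    ring

section EssSup

variable {I : Type*} [MeasurableSpace I]

def IsEssSup (μ : Measure I) (f : I → ℝ) (x : ℝ) : Prop :=
  (∀ᵐ i ∂μ, f i ≤ x) ∧ ∀ y < x, μ {i | y < f i} ≠ 0

lemma isEssSup_of_eq_sInf {μ : Measure I} {f : I → ℝ} {x : ℝ}
    (hx : x = sInf {a : ℝ | a ∈ Ioc (0 : ℝ) 1 ∧ μ {i | a < f i} = 0}) (hx01 : x ∈ Ioo (0 : ℝ) 1) :
    IsEssSup μ f x := by
  set B := {a : ℝ | a ∈ Ioc (0 : ℝ) 1 ∧ μ {i | a < f i} = 0}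
  have hB : B.Nonempty := by
    by_contra h
    rw [not_nonempty_iff_eq_empty.1 h, Real.sInf_empty] at hx
    exact hx01.1.ne' hx
  have hBbdd : BddBelow B := ⟨0, fun a ha => ha.1.1.le⟩
  refine ⟨?_, fun y hy => ?_⟩
  · obtain ⟨u, -, hu, huB⟩ := exists_seq_tendsto_sInf hB hBbdd
    have hle : ∀ᵐ i ∂μ, ∀ n, f i ≤ u n := ae_all_iff.2 fun n => by
      simpa only [ae_iff, not_le] using (huB n).2
    filter_upwards [hle] with i hi
    exact hx ▸ ge_of_tendsto' hu hi
  · have hmax : max y (x / 2) ∉ B :=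
      notMem_of_lt_csInf (hx ▸ max_lt hy (by linarith [hx01.1])) hBbdd
    intro hy0
    refine hmax ⟨⟨lt_max_of_lt_right (by linarith [hx01.1]),
      max_le (by linarith [hx01.2]) (by linarith [hx01.2])⟩, ?_⟩
    exact measure_mono_null (fun i hi => (le_max_left y _).trans_lt hi) hy0

lemma IsEssSup.comp_monotoneOn {μ : Measure I} {f : I → ℝ} {x : ℝ} {h : ℝ → ℝ} {S : Set ℝ}
    (hf : IsEssSup μ f x) (hfS : ∀ i, f i ∈ S) (hS : S ∈ 𝓝 x) (hh : MonotoneOn h S)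
    (hcont : ContinuousAt h x) : IsEssSup μ (h ∘ f) (h x) := by
  refine ⟨hf.1.mono fun i hi => hh (hfS i) (mem_of_mem_nhds hS) hi, fun y hy => ?_⟩
  have hnear : ∀ᶠ a in 𝓝[<] x, y < h a ∧ a ∈ S :=
    nhdsWithin_le_nhds ((hcont.eventually (lt_mem_nhds hy)).and hS)
  obtain ⟨a, ⟨hya, haS⟩, hax⟩ := (hnear.and self_mem_nhdsWithin).exists
  exact fun h0 => hf.2 a hax <| measure_mono_null
    (fun i (hi : a < f i) => hya.trans_le (hh haS (hfS i) hi.le)) h0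

end EssSup

section ExpMaxIntegral

variable {I : Type*} [MeasurableSpace I] {μ : Measure I} {a b s : I → ℝ}

noncomputable def expMaxIntegral (μ : Measure I) (a b s : I → ℝ) (t : ℝ) : ℝ :=
  ∫ i, max (a i) (b i * exp (s i * t)) ∂μ

lemma convexOn_expMaxIntegral (hb : ∀ i, 0 ≤ b i) (ha : Integrable a μ)
    (hbs : ∀ t, Integrable (fun i => b i * exp (s i * t)) μ) :
    ConvexOn ℝ univ (expMaxIntegral μ a b s) := by
  refine integral_convexOn_of_integrand_ae convex_univ (ae_of_all _ fun i => ?_)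
    fun t _ => ha.sup (hbs t)
  have hexp : ConvexOn ℝ univ fun t => b i * exp (s i * t) := by
    simpa [Function.comp_def] using
      (convexOn_exp.comp_linearMap (LinearMap.mul ℝ ℝ (s i))).smul (hb i)
  exact (convexOn_const (a i) convex_univ).sup hexp

lemma expMaxIntegral_le (ha0 : ∀ i, 0 ≤ a i) (hb : ∀ i, 0 ≤ b i) (ha : Integrable a μ)
    (hbs : ∀ t, Integrable (fun i => b i * exp (s i * t)) μ) {θ t : ℝ}
    (hs : ∀ᵐ i ∂μ, s i ≤ θ) (ht : 0 ≤ t) :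
    expMaxIntegral μ a b s t ≤ ∫ i, a i ∂μ + (∫ i, b i ∂μ) * exp (θ * t) := by
  have hbint : Integrable b μ := by simpa using hbs 0
  rw [← integral_mul_const, ← integral_add ha (hbint.mul_const _)]
  refine integral_mono_ae (ha.sup (hbs t)) (ha.add (hbint.mul_const _)) ?_
  filter_upwards [hs] with i hi
  refine max_le (le_add_of_nonneg_right (by positivity [hb i])) ?_
  exact (mul_le_mul_of_nonneg_left (exp_le_exp.2 (mul_le_mul_of_nonneg_right hi ht)) (hb i)).trans
    (le_add_of_nonneg_left (ha0 i))

lemma exists_mul_exp_le_expMaxIntegral (hb : ∀ i, 0 < b i) (ha : Integrable a μ)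
    (hbs : ∀ t, Integrable (fun i => b i * exp (s i * t)) μ) (hsm : Measurable s) {θ' : ℝ}
    (hθ' : μ {i | θ' < s i} ≠ 0) :
    ∃ ε > 0, ∀ t ≥ 0, ε * exp (θ' * t) ≤ expMaxIntegral μ a b s t := by
  set S := {i | θ' < s i}
  have hbint : Integrable b μ := by simpa using hbs 0
  refine ⟨∫ i in S, b i ∂μ, ?_, fun t ht => ?_⟩
  · refine (setIntegral_pos_iff_support_of_nonneg_ae (ae_of_all _ fun i => (hb i).le)
      hbint.integrableOn).2 ?_
    rwa [Function.support_eq_univ fun i => (hb i).ne', univ_inter, pos_iff_ne_zero]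
  calc (∫ i in S, b i ∂μ) * exp (θ' * t) = ∫ i in S, b i * exp (θ' * t) ∂μ :=
        (integral_mul_const _ _).symm
    _ ≤ ∫ i in S, max (a i) (b i * exp (s i * t)) ∂μ :=
        setIntegral_mono_on (hbint.mul_const _).integrableOn (ha.sup (hbs t)).integrableOn
          (measurableSet_lt measurable_const hsm) fun i (hi : θ' < s i) =>
          (mul_le_mul_of_nonneg_left (exp_le_exp.2 (mul_le_mul_of_nonneg_right hi.le ht))
            (hb i).le).trans (le_max_right _ _)
    _ ≤ expMaxIntegral μ a b s t :=
        setIntegral_le_integral (ha.sup (hbs t))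
          (ae_of_all _ fun i => (by positivity [hb i] : 0 ≤ b i * exp (s i * t)).trans
            (le_max_right _ _))

lemma tendsto_log_expMaxIntegral_div_self (ha0 : ∀ i, 0 ≤ a i) (hb : ∀ i, 0 < b i)
    (ha : Integrable a μ) (hbs : ∀ t, Integrable (fun i => b i * exp (s i * t)) μ)
    (hsm : Measurable s) {θ : ℝ} (hθ : 0 ≤ θ) (hess : IsEssSup μ s θ) :
    Tendsto (fun t => log (expMaxIntegral μ a b s t) / t) atTop (𝓝 θ) := by
  refine tendsto_log_div_self_of_exp_bounds (fun θ' hθ' => ?_)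
    ⟨∫ i, a i ∂μ + ∫ i, b i ∂μ + 1, ?_, ?_⟩
  · obtain ⟨ε, hε, h⟩ := exists_mul_exp_le_expMaxIntegral hb ha hbs hsm (hess.2 θ' hθ')
    exact ⟨ε, hε, (eventually_ge_atTop 0).mono h⟩
  · exact add_pos_of_nonneg_of_pos (add_nonneg (integral_nonneg ha0)
      (integral_nonneg fun i => (hb i).le)) one_pos
  · filter_upwards [eventually_ge_atTop 0] with t ht
    have h1 : 1 ≤ exp (θ * t) := one_le_exp (mul_nonneg hθ ht)
    have h2 := expMaxIntegral_le ha0 (fun i => (hb i).le) ha hbs hess.1 ht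
    have h3 : 0 ≤ ∫ i, a i ∂μ := integral_nonneg ha0
    nlinarith

end ExpMaxIntegral

lemma monotoneOn_div_one_sub_mul {k : ℝ} (hk : 0 ≤ k) :
    MonotoneOn (fun x : ℝ => k / (1 - x) * x) (Iio 1) := by
  intro x hx y hy hxy
  simp only
  rw [div_mul_eq_mul_div, div_mul_eq_mul_div,
    div_le_div_iff₀ (sub_pos.2 (mem_Iio.1 hx)) (sub_pos.2 (mem_Iio.1 hy))]
  nlinarith

lemma mul_rpow_rpow_eq_rpow_mul_exp {K p e r : ℝ} (hK : 0 ≤ K) (hp : 0 < p) :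
    (K * p ^ e) ^ r = K ^ r * exp (e * r * log p) := by
  rw [mul_rpow hK (rpow_nonneg hp.le _), ← rpow_mul hp.le, rpow_def_of_pos hp, mul_comm (log p)]

theorem statement7_general
    {I : Type*} [MeasurableSpace I] (ι : Measure I)
    (β γ : ℝ) (hβ : 0 < β) (hγ : γ ∈ Set.Ioo (0:ℝ) 1)
    (c α lam : I → ℝ) (hαm : Measurable α)
    (hcpos : ∀ i, 0 < c i) (hαmem : ∀ i, α i ∈ Set.Ioo (0:ℝ) 1) (hlampos : ∀ i, 0 < lam i)
    (hκint : Integrable (fun i => lam i * (c i) ^ (α i)) ι)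
    (K : I → ℝ) (hKpos : ∀ i, 0 < K i)
    (Ψ : I → ℝ → ℝ)
    (hΨdef : ∀ i, ∀ p > (0:ℝ), Ψ i p = K i * p ^ ((1 + β) / (1 - α i)))
    (hΨ : MemB ι α lam Ψ)
    (abar : ℝ)
    (habar : abar = sInf {a : ℝ | a ∈ Set.Ioc (0:ℝ) 1 ∧ ι {i | a < α i} = 0})
    (habar01 : abar ∈ Set.Ioo (0:ℝ) 1) :
    Tendsto (fun p => Real.log (Iop ι β γ c α lam Ψ p) / Real.log p) atTop
      (nhds (-(abar * (1 + β) * γ / (1 - abar)))) ∧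
    Tendsto (fun p => Real.log (-(leftDeriv (Iop ι β γ c α lam Ψ) p)) / Real.log p) atTop
      (nhds (-(abar * (1 + β) * γ / (1 - abar)) - 1)) := by
  set s : I → ℝ := fun i => (1 + β) / (1 - α i) * α i
  set θ := (1 + β) / (1 - abar) * abar
  have hθ : 0 < θ := mul_pos (div_pos (by linarith) (by linarith [habar01.2])) habar01.1
  have hess : IsEssSup ι s θ := (isEssSup_of_eq_sInf habar habar01).comp_monotoneOn
    (fun i => (hαmem i).2) (Iio_mem_nhds habar01.2) (monotoneOn_div_one_sub_mul (by linarith))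
    (by fun_prop (disch := exact (sub_pos.2 habar01.2).ne'))
  have hsm : Measurable s := (measurable_const.div (measurable_const.sub hαm)).mul hαm
  have hpow : ∀ i, ∀ p > 0, lam i * Ψ i p ^ α i = lam i * K i ^ α i * exp (s i * log p) := by
    intro i p hp
    rw [hΨdef i p hp, mul_rpow_rpow_eq_rpow_mul_exp (hKpos i).le hp, ← mul_assoc]
  have hbs : ∀ t, Integrable (fun i => lam i * K i ^ α i * exp (s i * t)) ι := fun t => by
    simpa [hpow _ _ (exp_pos t)] using hΨ.2.1 (exp t) (exp_pos t)
  have ha0 : ∀ i, 0 ≤ lam i * c i ^ α i := fun i => by positivity [hlampos i, hcpos i]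
  have hb : ∀ i, 0 < lam i * K i ^ α i := fun i => by positivity [hlampos i, hKpos i]
  have hIop : ∀ p > 0, Iop ι β γ c α lam Ψ p = ((1 + β) * expMaxIntegral ι
      (fun i => lam i * c i ^ α i) (fun i => lam i * K i ^ α i) s (log p)) ^ (-γ) := by
    intro p hp
    simp only [Iop, expMaxIntegral, ← hpow _ p hp, mul_max_of_nonneg _ _ (hlampos _).le]
  obtain ⟨ε, hε, hlow⟩ := exists_mul_exp_le_expMaxIntegral hb hκint hbs hsm (hess.2 0 hθ)
  obtain ⟨h₁, h₂⟩ := (convexOn_expMaxIntegral (fun i => (hb i).le) hκint hbs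
    ).tendsto_log_div_log_of_eq_rpow_comp_log (by linarith) hγ.1 hθ
    ((eventually_ge_atTop 0).mono fun t ht => (mul_pos hε (exp_pos _)).trans_le (hlow t ht))
    (tendsto_log_expMaxIntegral_div_self ha0 hb hκint hbs hsm hθ.le hess) hIop
  have hlim : -γ * θ = -(abar * (1 + β) * γ / (1 - abar)) := by ring
  exact ⟨hlim ▸ h₁, hlim ▸ h₂⟩

/-- Let Ψᵢ(p̄) = Kᵢ p̄^{(1+β)/(1−αᵢ)} define a family Ψ ∈ ℬ and suppose
ᾱ := ι-ess sup α ∈ (0,1).  With ψ := ℐ[Ψ], one has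
lim_{p̄→∞} ln ψ(p̄)/ln p̄ = −ᾱ(1+β)γ/(1−ᾱ) and
lim_{p̄→∞} ln(−ψ′₋(p̄))/ln p̄ = −ᾱ(1+β)γ/(1−ᾱ) − 1. -/
theorem statement7
    {I : Type*} [MeasurableSpace I] (ι : Measure I) [SigmaFinite ι]
    (β γ : ℝ) (hβ : 0 < β) (hγ : γ ∈ Set.Ioo (0:ℝ) 1)
    (c α lam : I → ℝ) (hcm : Measurable c) (hαm : Measurable α) (hlamm : Measurable lam)
    (hcpos : ∀ i, 0 < c i) (hαmem : ∀ i, α i ∈ Set.Ioo (0:ℝ) 1) (hlampos : ∀ i, 0 < lam i)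
    (hκint : Integrable (fun i => lam i * (c i) ^ (α i)) ι)
    (hκpos : 0 < ∫ i, lam i * (c i) ^ (α i) ∂ι)
    (K : I → ℝ) (hKm : Measurable K) (hKpos : ∀ i, 0 < K i)
    (Ψ : I → ℝ → ℝ)
    (hΨdef : ∀ i, ∀ p > (0:ℝ), Ψ i p = K i * p ^ ((1 + β) / (1 - α i)))
    (hΨ : MemB ι α lam Ψ)
    (abar : ℝ)
    (habar : abar = sInf {a : ℝ | a ∈ Set.Ioc (0:ℝ) 1 ∧ ι {i | a < α i} = 0})
    (habar01 : abar ∈ Set.Ioo (0:ℝ) 1) :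
    Tendsto (fun p => Real.log (Iop ι β γ c α lam Ψ p) / Real.log p) atTop
      (nhds (-(abar * (1 + β) * γ / (1 - abar)))) ∧
    Tendsto (fun p => Real.log (-(leftDeriv (Iop ι β γ c α lam Ψ) p)) / Real.log p) atTop
      (nhds (-(abar * (1 + β) * γ / (1 - abar)) - 1)) :=
  statement7_general ι β γ hβ hγ c α lam hαm hcpos hαmem hlampos hκint K hKpos Ψ hΨdef hΨ abar habar
    habar01
end

section
/- Let α ∈ (0,1), c > 0, k > 0 and p > 0 be constants. Then G* := ((r−μ) n k / (α(n−1))) · c^{1−α} / p is the unique G > 0 satisfying ∫₀^{G} y^{−m−1} ( α c^{α−1} y p − r k ) dy = 0, and moreover α c^{α−1} x p − r k > 0 for every x ≥ G*. -/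
/-!
With `e = -m > 0`, the integrand is `y ^ (e - 1) * (A * y - B)` for `A = α c^{α-1} p`, `B = r k`,
whose integral over `[0, G]` is `G ^ e * (A G / (e + 1) - B / e)`. For `G > 0` this vanishes only
at `G = B (e + 1) / (A e)`, and beyond that point `A x - B ≥ B / e > 0`. Vieta's formulas for the
roots `m, n` turn this threshold into the stated `G*`.
-/

open Real

section Roots

variable {σ μ r m n : ℝ}

lemma root_add_root_mul_sq (hσ : σ ≠ 0)
    (hm : m = (-(μ - σ ^ 2 / 2) - √((μ - σ ^ 2 / 2) ^ 2 + 2 * σ ^ 2 * r)) / σ ^ 2)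
    (hn : n = (-(μ - σ ^ 2 / 2) + √((μ - σ ^ 2 / 2) ^ 2 + 2 * σ ^ 2 * r)) / σ ^ 2) :
    (m + n) * σ ^ 2 = σ ^ 2 - 2 * μ := by
  rw [hm, hn]
  field_simp
  ring

lemma root_mul_root_mul_sq (hσ : σ ≠ 0) (hr : 0 ≤ r)
    (hm : m = (-(μ - σ ^ 2 / 2) - √((μ - σ ^ 2 / 2) ^ 2 + 2 * σ ^ 2 * r)) / σ ^ 2)
    (hn : n = (-(μ - σ ^ 2 / 2) + √((μ - σ ^ 2 / 2) ^ 2 + 2 * σ ^ 2 * r)) / σ ^ 2) :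
    m * n * σ ^ 2 = -2 * r := by
  have hs := sq_sqrt (by positivity : 0 ≤ (μ - σ ^ 2 / 2) ^ 2 + 2 * σ ^ 2 * r)
  rw [hm, hn]
  generalize √((μ - σ ^ 2 / 2) ^ 2 + 2 * σ ^ 2 * r) = s at hs ⊢
  rw [div_mul_div_comm, div_mul_eq_mul_div, div_eq_iff (by positivity)]
  linear_combination (-σ ^ 2) * hs

lemma root_neg (hσ : σ ≠ 0) (hr : 0 < r)
    (hm : m = (-(μ - σ ^ 2 / 2) - √((μ - σ ^ 2 / 2) ^ 2 + 2 * σ ^ 2 * r)) / σ ^ 2) :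
    m < 0 := by
  have hσ2 : 0 < σ ^ 2 := by positivity
  have : -(μ - σ ^ 2 / 2) < √((μ - σ ^ 2 / 2) ^ 2 + 2 * σ ^ 2 * r) :=
    lt_sqrt_of_sq_lt (by nlinarith)
  rw [hm]
  exact div_neg_of_neg_of_pos (by linarith) hσ2

lemma one_lt_root (hσ : σ ≠ 0) (hrμ : μ < r)
    (hn : n = (-(μ - σ ^ 2 / 2) + √((μ - σ ^ 2 / 2) ^ 2 + 2 * σ ^ 2 * r)) / σ ^ 2) :
    1 < n := by
  have hσ2 : 0 < σ ^ 2 := by positivity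
  have : μ - σ ^ 2 / 2 + σ ^ 2 < √((μ - σ ^ 2 / 2) ^ 2 + 2 * σ ^ 2 * r) :=
    lt_sqrt_of_sq_lt (by nlinarith)
  rw [hn, one_lt_div hσ2]
  linarith

lemma rate_mul_one_sub_root_mul_root_sub_one (hσ : σ ≠ 0) (hr : 0 ≤ r)
    (hm : m = (-(μ - σ ^ 2 / 2) - √((μ - σ ^ 2 / 2) ^ 2 + 2 * σ ^ 2 * r)) / σ ^ 2)
    (hn : n = (-(μ - σ ^ 2 / 2) + √((μ - σ ^ 2 / 2) ^ 2 + 2 * σ ^ 2 * r)) / σ ^ 2) :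
    r * (1 - m) * (n - 1) = (r - μ) * n * -m := by
  apply mul_right_cancel₀ (pow_ne_zero 2 hσ)
  linear_combination r * root_add_root_mul_sq hσ hm hn - μ * root_mul_root_mul_sq hσ hr hm hn

end Roots

section AffineMoment

variable {e A B G : ℝ}

lemma integral_rpow_mul_affine (he : 0 < e) (hG : 0 ≤ G) :
    ∫ y in (0:ℝ)..G, y ^ (e - 1) * (A * y - B) = G ^ e * (A * G / (e + 1) - B / e) := by
  have hsplit : ∀ y ∈ Set.uIcc (0:ℝ) G,
      y ^ (e - 1) * (A * y - B) = A * y ^ e - B * y ^ (e - 1) := by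
    intro y hy
    rw [Set.uIcc_of_le hG] at hy
    rw [show y ^ e = y ^ (e - 1) * y by
      rw [← rpow_add_one' hy.1 (by linarith), sub_add_cancel]]
    ring
  have hrpow : ∀ a : ℝ, -1 < a → IntervalIntegrable (fun y : ℝ => y ^ a) MeasureTheory.volume 0 G :=
    fun a ha => intervalIntegral.intervalIntegrable_rpow' ha
  rw [intervalIntegral.integral_congr hsplit,
    intervalIntegral.integral_sub ((hrpow e (by linarith)).const_mul A)
      ((hrpow (e - 1) (by linarith)).const_mul B),
    intervalIntegral.integral_const_mul, intervalIntegral.integral_const_mul,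
    integral_rpow (Or.inl (by linarith)), integral_rpow (Or.inl (by linarith)),
    zero_rpow (by linarith), zero_rpow (by linarith), sub_add_cancel,
    rpow_add_one' hG (by linarith : e + 1 ≠ 0)]
  ring

lemma integral_rpow_mul_affine_eq_zero_iff (he : 0 < e) (hA : A ≠ 0) (hG : 0 < G) :
    ∫ y in (0:ℝ)..G, y ^ (e - 1) * (A * y - B) = 0 ↔ G = B * (e + 1) / (A * e) := by
  rw [integral_rpow_mul_affine he hG.le, mul_eq_zero, or_iff_right (rpow_pos_of_pos hG e).ne',
    sub_eq_zero, div_eq_div_iff (by linarith) he.ne', eq_div_iff (mul_ne_zero hA he.ne')]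
  constructor <;> intro h <;> linarith

lemma sub_pos_of_div_le {x : ℝ} (he : 0 < e) (hA : 0 < A) (hB : 0 < B)
    (hx : B * (e + 1) / (A * e) ≤ x) : 0 < A * x - B := by
  rw [div_le_iff₀ (mul_pos hA he)] at hx
  have : 0 < (A * x - B) * e := by nlinarith
  exact pos_of_mul_pos_left this he.le

end AffineMoment

/-- With r > μ and m < 0 < n the roots of ½σ²ℓ² + (μ−½σ²)ℓ − r = 0, and
constants α ∈ (0,1), c, k, p > 0, the point G* = ((r−μ)nk/(α(n−1))) c^{1−α}/p is the
unique G > 0 with ∫₀^G y^{−m−1}(αc^{α−1}yp − rk) dy = 0, and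
αc^{α−1}xp − rk > 0 for every x ≥ G*. -/
theorem statement11 (σ μ r : ℝ) (hσ : 0 < σ) (hr : 0 < r) (hrμ : μ < r)
    (m n : ℝ)
    (hm : m = (-(μ - σ ^ 2 / 2) - Real.sqrt ((μ - σ ^ 2 / 2) ^ 2 + 2 * σ ^ 2 * r)) / σ ^ 2)
    (hn : n = (-(μ - σ ^ 2 / 2) + Real.sqrt ((μ - σ ^ 2 / 2) ^ 2 + 2 * σ ^ 2 * r)) / σ ^ 2)
    (α c k p : ℝ) (hα : α ∈ Set.Ioo (0:ℝ) 1) (hc : 0 < c) (hk : 0 < k) (hp : 0 < p)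
    (Gstar : ℝ)
    (hGstar : Gstar = (r - μ) * n * k / (α * (n - 1)) * c ^ (1 - α) / p) :
    0 < Gstar ∧
    (∫ y in (0:ℝ)..Gstar, y ^ (-m - 1) * (α * c ^ (α - 1) * y * p - r * k)) = 0 ∧
    (∀ G > (0:ℝ),
      (∫ y in (0:ℝ)..G, y ^ (-m - 1) * (α * c ^ (α - 1) * y * p - r * k)) = 0 →
      G = Gstar) ∧
    ∀ x, Gstar ≤ x → 0 < α * c ^ (α - 1) * x * p - r * k := by
  have hσ0 : σ ≠ 0 := hσ.ne'
  have he : 0 < -m := neg_pos.2 (root_neg hσ0 hr hm)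
  have hn1 : 1 < n := one_lt_root hσ0 hrμ hn
  have hA : 0 < α * c ^ (α - 1) * p := mul_pos (mul_pos hα.1 (rpow_pos_of_pos hc _)) hp
  have hGstar' : Gstar = r * k * (-m + 1) / (α * c ^ (α - 1) * p * -m) := by
    rw [hGstar, ← neg_sub α 1, rpow_neg hc.le]
    field_simp [(rpow_pos_of_pos hc (α - 1)).ne', hα.1.ne', hp.ne', neg_ne_zero.1 he.ne',
      (sub_pos.2 hn1).ne']
    linear_combination rate_mul_one_sub_root_mul_root_sub_one hσ0 hr.le hm hn
  have hzero_iff : ∀ G > (0:ℝ),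
      (∫ y in (0:ℝ)..G, y ^ (-m - 1) * (α * c ^ (α - 1) * y * p - r * k)) = 0 ↔ G = Gstar := by
    intro G hG
    rw [hGstar', ← integral_rpow_mul_affine_eq_zero_iff he hA.ne' hG]
    exact Iff.of_eq (congrArg (· = 0) (intervalIntegral.integral_congr fun y _ => by ring))
  have hGpos : 0 < Gstar := by
    rw [hGstar']
    exact div_pos (mul_pos (mul_pos hr hk) (by linarith)) (mul_pos hA he)
  refine ⟨hGpos, (hzero_iff _ hGpos).2 rfl, fun G hG h => (hzero_iff G hG).1 h, fun x hx => ?_⟩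
  rw [hGstar'] at hx
  simpa only [mul_right_comm _ p x] using sub_pos_of_div_le he hA (mul_pos hr hk) hx
end

section
/- Let α ∈ (0,1) and k > 0 with ε₀ := (n−1)(1−α)/α − ρ > 0, and let φ : (0,∞) → (0,∞) be such that for every ε > 0 there exist constants K̃(ε) > 0 and x̃(ε) > 1 with x̄ φ(x̄) ≤ K̃(ε) x̄^{ρ+ε} for all x̄ > x̃(ε). Define Φ(x̄) = (α(n−1)/((r−μ)nk))^{1/(1−α)} (x̄ φ(x̄))^{1/(1−α)}. Then there exist constants θ > 0, x₀ > 1 and K > 0 such that for all x̄ > x₀: Φ(x̄) ≤ K x̄^{n−θ}, and x Φ(x̄)^{α} ≤ K x̄^{n−θ} for every 0 < x ≤ x̄. -/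
open Filter

/-- With n > 1 (the positive root of the Euler quadratic, r > μ),
ρ = (1−ᾱ)/(1−ᾱ+ᾱγ), α ∈ (0,1), k > 0 with ε₀ := (n−1)(1−α)/α − ρ > 0, and
φ : (0,∞) → (0,∞) satisfying x̄φ(x̄) ≤ K̃(ε) x̄^{ρ+ε} for large x̄, the function
Φ(x̄) = (α(n−1)/((r−μ)nk))^{1/(1−α)} (x̄φ(x̄))^{1/(1−α)} satisfies, for suitable
θ > 0, x₀ > 1 and K > 0, the bounds Φ(x̄) ≤ K x̄^{n−θ} and x Φ(x̄)^α ≤ K x̄^{n−θ}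
for all x̄ > x₀ and all 0 < x ≤ x̄. -/
theorem statement12 (σ μ r : ℝ) (hσ : 0 < σ) (hr : 0 < r) (hrμ : μ < r)
    (n : ℝ)
    (hn : n = (-(μ - σ ^ 2 / 2) + Real.sqrt ((μ - σ ^ 2 / 2) ^ 2 + 2 * σ ^ 2 * r)) / σ ^ 2)
    (abar γ : ℝ) (habar : abar ∈ Set.Ioo (0:ℝ) 1) (hγ : γ ∈ Set.Ioo (0:ℝ) 1)
    (ρ : ℝ) (hρ : ρ = (1 - abar) / (1 - abar + abar * γ))
    (α k : ℝ) (hα : α ∈ Set.Ioo (0:ℝ) 1) (hk : 0 < k)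
    (hε₀ : 0 < (n - 1) * (1 - α) / α - ρ)
    (φ : ℝ → ℝ) (hφpos : ∀ x > (0:ℝ), 0 < φ x)
    (hφbound : ∀ ε > (0:ℝ), ∃ Kt > (0:ℝ), ∃ xt > (1:ℝ),
      ∀ x > xt, x * φ x ≤ Kt * x ^ (ρ + ε))
    (Φ : ℝ → ℝ)
    (hΦ : ∀ x > (0:ℝ),
      Φ x = (α * (n - 1) / ((r - μ) * n * k)) ^ (1 / (1 - α)) * (x * φ x) ^ (1 / (1 - α))) :
    ∃ θ > (0:ℝ), ∃ x₀ > (1:ℝ), ∃ K > (0:ℝ), ∀ xb > x₀,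
      Φ xb ≤ K * xb ^ (n - θ) ∧
      ∀ x, 0 < x → x ≤ xb → x * (Φ xb) ^ α ≤ K * xb ^ (n - θ) := by
  obtain ⟨hα0, hα1⟩ := hα
  have h1α : 0 < 1 - α := by linarith
  -- n > 1
  have hn1 : 1 < n := by
    have hσ2 : 0 < σ ^ 2 := by positivity
    set b := μ - σ ^ 2 / 2 with hb
    have hdisc : b ^ 2 + 2 * σ ^ 2 * r > 0 := by positivity
    have hs : Real.sqrt (b ^ 2 + 2 * σ ^ 2 * r) > σ ^ 2 + b := by
      rcases le_or_gt (σ ^ 2 + b) 0 with h | h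
      · calc σ ^ 2 + b ≤ 0 := h
          _ < _ := Real.sqrt_pos.mpr hdisc
      · have hlt : σ ^ 2 + 2 * b < 2 * r := by rw [hb]; linarith
        have : (σ ^ 2 + b) ^ 2 < b ^ 2 + 2 * σ ^ 2 * r := by
          nlinarith [mul_lt_mul_of_pos_left hlt hσ2]
        nlinarith [Real.sq_sqrt hdisc.le, Real.sqrt_nonneg (b ^ 2 + 2 * σ ^ 2 * r)]
    rw [hn, lt_div_iff₀ hσ2]
    linarith
  -- ρ ∈ (0,1)
  obtain ⟨hab0, hab1⟩ := habar
  obtain ⟨hγ0, hγ1⟩ := hγ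
  have hden : 0 < 1 - abar + abar * γ := by nlinarith
  have hρ0 : 0 < ρ := by rw [hρ]; exact div_pos (by linarith) hden
  have hρ1 : ρ < 1 := by
    rw [hρ, div_lt_one hden]; nlinarith
  -- key quantities
  set E0 : ℝ := (n - 1) * (1 - α) / α - ρ with hE0
  have hE0pos : 0 < E0 := hε₀
  have hE0eq : α * E0 = (n - 1) * (1 - α) - α * ρ := by
    rw [hE0]; field_simp
  have hαρ : α * ρ < (n - 1) * (1 - α) := by nlinarith
  have hδpos : 0 < n * (1 - α) - ρ := by nlinarith
  set δ : ℝ := n * (1 - α) - ρ with hδ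
  clear_value E0
  clear_value δ
  set ε : ℝ := min (E0 / 2) (δ / 2) with hε
  have hεpos : 0 < ε := lt_min (half_pos hE0pos) (half_pos hδpos)
  have hεE : ε ≤ E0 / 2 := min_le_left _ _
  have hεδ : ε ≤ δ / 2 := min_le_right _ _
  set θ : ℝ := min (α * E0 / (2 * (1 - α))) (δ / (2 * (1 - α))) with hθ
  have hθpos : 0 < θ := lt_min (by positivity) (by positivity)
  have hθ1 : θ ≤ α * E0 / (2 * (1 - α)) := min_le_left _ _
  have hθ2 : θ ≤ δ / (2 * (1 - α)) := min_le_right _ _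
  clear_value ε
  clear_value θ
  have h2pos : (0:ℝ) < 2 * (1 - α) := by positivity
  have hθ2' : θ * (2 * (1 - α)) ≤ δ := by
    rw [le_div_iff₀ h2pos] at hθ2; exact hθ2
  have hθ1' : θ * (2 * (1 - α)) ≤ α * E0 := by
    rw [le_div_iff₀ h2pos] at hθ1; exact hθ1
  -- exponent bounds
  have hexp1 : (ρ + ε) / (1 - α) ≤ n - θ := by
    rw [div_le_iff₀ h1α]
    have h1 : ε ≤ (n * (1 - α) - ρ) / 2 := by rw [← hδ]; exact hεδ
    have h2 : θ * (2 * (1 - α)) ≤ n * (1 - α) - ρ := by rw [← hδ]; exact hθ2'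
    linarith [h1, h2]
  have hexp2 : 1 + α * ((ρ + ε) / (1 - α)) ≤ n - θ := by
    have hαε : α * ε ≤ α * (E0 / 2) := mul_le_mul_of_nonneg_left hεE hα0.le
    have key : α * (ρ + ε) ≤ (n - 1 - θ) * (1 - α) := by linarith [hαε, hθ1', hE0eq]
    have h3 : α * ((ρ + ε) / (1 - α)) ≤ n - 1 - θ := by
      calc α * ((ρ + ε) / (1 - α)) = α * (ρ + ε) / (1 - α) := by ring
        _ ≤ _ := by rw [div_le_iff₀ h1α]; linarith [key]
    linarith
  -- get the φ bound
  obtain ⟨Kt, hKt, xt, hxt, hbnd⟩ := hφbound ε hεpos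
  -- constants
  have hCbase : 0 < α * (n - 1) / ((r - μ) * n * k) := by
    exact div_pos (mul_pos hα0 (by linarith))
      (mul_pos (mul_pos (by linarith : (0:ℝ) < r - μ) (by linarith : (0:ℝ) < n)) hk)
  set C : ℝ := (α * (n - 1) / ((r - μ) * n * k)) ^ (1 / (1 - α)) with hC
  have hCpos : 0 < C := Real.rpow_pos_of_pos hCbase _
  set A : ℝ := C * Kt ^ (1 / (1 - α)) with hA
  have hApos : 0 < A := mul_pos hCpos (Real.rpow_pos_of_pos hKt _)
  refine ⟨θ, hθpos, xt, hxt, max A (A ^ α),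
    lt_of_lt_of_le hApos (le_max_left _ _), ?_⟩
  intro xb hxb
  have hxb1 : 1 < xb := lt_trans hxt hxb
  have hxb0 : 0 < xb := by linarith
  have hφb := hφpos xb hxb0
  have hxφ : 0 < xb * φ xb := mul_pos hxb0 hφb
  -- main Φ bound
  have hΦle : Φ xb ≤ A * xb ^ ((ρ + ε) / (1 - α)) := by
    rw [hΦ xb hxb0]
    have h1 : (xb * φ xb) ^ (1 / (1 - α)) ≤ (Kt * xb ^ (ρ + ε)) ^ (1 / (1 - α)) :=
      Real.rpow_le_rpow hxφ.le (hbnd xb hxb) (by positivity)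
    have h2 : (Kt * xb ^ (ρ + ε)) ^ (1 / (1 - α))
        = Kt ^ (1 / (1 - α)) * xb ^ ((ρ + ε) / (1 - α)) := by
      rw [Real.mul_rpow hKt.le (Real.rpow_nonneg hxb0.le _), ← Real.rpow_mul hxb0.le,
        mul_one_div]
    calc C * (xb * φ xb) ^ (1 / (1 - α))
        ≤ C * (Kt * xb ^ (ρ + ε)) ^ (1 / (1 - α)) := by
          exact mul_le_mul_of_nonneg_left h1 hCpos.le
      _ = A * xb ^ ((ρ + ε) / (1 - α)) := by rw [h2, hA]; ring
  have hΦpos : 0 < Φ xb := by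
    rw [hΦ xb hxb0]
    exact mul_pos hCpos (Real.rpow_pos_of_pos hxφ _)
  have hmono : xb ^ ((ρ + ε) / (1 - α)) ≤ xb ^ (n - θ) :=
    Real.rpow_le_rpow_of_exponent_le hxb1.le hexp1
  constructor
  · calc Φ xb ≤ A * xb ^ ((ρ + ε) / (1 - α)) := hΦle
      _ ≤ A * xb ^ (n - θ) := mul_le_mul_of_nonneg_left hmono hApos.le
      _ ≤ max A (A ^ α) * xb ^ (n - θ) := by
          apply mul_le_mul_of_nonneg_right (le_max_left _ _) (by positivity)
  · intro x hx0 hxle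
    have hΦαle : (Φ xb) ^ α ≤ A ^ α * xb ^ (α * ((ρ + ε) / (1 - α))) := by
      calc (Φ xb) ^ α ≤ (A * xb ^ ((ρ + ε) / (1 - α))) ^ α :=
            Real.rpow_le_rpow hΦpos.le hΦle hα0.le
        _ = A ^ α * xb ^ (α * ((ρ + ε) / (1 - α))) := by
            rw [Real.mul_rpow hApos.le (Real.rpow_nonneg hxb0.le _),
              ← Real.rpow_mul hxb0.le, mul_comm ((ρ + ε) / (1 - α)) α]
    calc x * (Φ xb) ^ α ≤ xb * (A ^ α * xb ^ (α * ((ρ + ε) / (1 - α)))) := by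
          apply mul_le_mul hxle hΦαle (Real.rpow_nonneg hΦpos.le _) hxb0.le
      _ = A ^ α * xb ^ (1 + α * ((ρ + ε) / (1 - α))) := by
          rw [Real.rpow_add hxb0, Real.rpow_one]; ring
      _ ≤ A ^ α * xb ^ (n - θ) := by
          apply mul_le_mul_of_nonneg_left
            (Real.rpow_le_rpow_of_exponent_le hxb1.le hexp2)
            (Real.rpow_nonneg hApos.le _)
      _ ≤ max A (A ^ α) * xb ^ (n - θ) := by
          apply mul_le_mul_of_nonneg_right (le_max_right _ _) (by positivity)
end
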